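/- There exists a constant c > 0, depending only on L and h, such that for all u of class C¹ on M̄ vanishing on Γ_l ∪ Γ_b with ∫_{−h}^0 u(x,z) dz = 0 for all x, all φ of class C² on M̄ vanishing on Γ_l ∪ Γ_b, and all continuous ψ on M̄, one has | ∫_M ( u ∂_x φ + w(u) ∂_z φ ) ψ dM | ≤ c ‖u‖_{H¹} ‖φ‖_{H¹}^{1/2} |φ|_{H²}^{1/2} |ψ|. -/

import Mathlib

open MeasureTheory Set intervalIntegral

/-- Partial derivative in the first (horizontal, `x`) variable. -/
noncomputable def pdx (f : ℝ × ℝ → ℝ) (p : ℝ × ℝ) : ℝ := fderiv ℝ f p (1, 0)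

/-- Partial derivative in the second (vertical, `z`) variable. -/
noncomputable def pdz (f : ℝ × ℝ → ℝ) (p : ℝ × ℝ) : ℝ := fderiv ℝ f p (0, 1)

/-- The diagnostic vertical velocity `w(u)(x,z) = ∫_z^0 ∂ₓ u(x,s) ds`. -/
noncomputable def wOp (u : ℝ × ℝ → ℝ) (p : ℝ × ℝ) : ℝ := ∫ s in p.2..0, pdx u (p.1, s)

/-- The open domain `M = (0,L) × (-h,0)`. -/
def dom (L h : ℝ) : Set (ℝ × ℝ) := Ioo 0 L ×ˢ Ioo (-h) 0

/-- The closed domain `M̄ = [0,L] × [-h,0]`. -/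
def cdom (L h : ℝ) : Set (ℝ × ℝ) := Icc 0 L ×ˢ Icc (-h) 0

/-- The `L²(M)` norm. -/
noncomputable def l2 (L h : ℝ) (f : ℝ × ℝ → ℝ) : ℝ :=
  Real.sqrt (∫ p in dom L h, f p ^ 2)

/-- The `H¹(M)` norm. -/
noncomputable def h1n (L h : ℝ) (f : ℝ × ℝ → ℝ) : ℝ :=
  Real.sqrt (l2 L h f ^ 2 + l2 L h (pdx f) ^ 2 + l2 L h (pdz f) ^ 2)

/-- The `H²(M)` norm. -/
noncomputable def h2n (L h : ℝ) (f : ℝ × ℝ → ℝ) : ℝ :=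
  Real.sqrt (h1n L h f ^ 2 + l2 L h (pdx (pdx f)) ^ 2 + l2 L h (pdx (pdz f)) ^ 2
    + l2 L h (pdz (pdz f)) ^ 2)

/-!
Since `u` vanishes at `z = -h`, the fundamental theorem of calculus in `z` gives
`u(x,z)² ≤ ∫ 2|u||∂_z u| dz`, and Cauchy–Schwarz gives `w(u)(x,z)² ≤ h ∫ (∂ₓu)² dz`. Both
right-hand sides are functions of `x` alone whose integrals over `(0,L)` are `≲ ‖u‖²_{H¹}`.
Dually, for `F = ∂ₓφ` and `F = ∂_zφ` the vertical integral `∫ F(x,z)² dz` is bounded uniformly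
in `x` by `|F|²/L + 2|F||∂ₓF| ≲ ‖φ‖_{H¹}|φ|_{H²}`: average
`F(x,z)² ≤ F(x',z)² + ∫ 2|F||∂ₓF| dt` over `x' ∈ (0,L)`. Integrating in `z` and then in `x`
bounds `|u ∂ₓφ + w(u) ∂_zφ|²` by `‖u‖²_{H¹}‖φ‖_{H¹}|φ|_{H²}`; Cauchy–Schwarz against `ψ`
finishes.
-/

lemma integral_abs_mul_abs_le {α : Type*} [MeasurableSpace α] {μ : Measure α} {f g : α → ℝ}
    (hf : MemLp f 2 μ) (hg : MemLp g 2 μ) :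
    ∫ x, |f x| * |g x| ∂μ ≤ √(∫ x, f x ^ 2 ∂μ) * √(∫ x, g x ^ 2 ∂μ) := by
  have H := integral_mul_norm_le_Lp_mul_Lq Real.HolderConjugate.two_two
    (by simpa using hf) (by simpa using hg)
  simpa [Real.sqrt_eq_rpow, Real.rpow_two] using H

lemma memLp_two_restrict_of_subset_isCompact {α : Type*} [TopologicalSpace α] [MeasurableSpace α]
    [OpensMeasurableSpace α] [T2Space α] {μ : Measure α} [IsFiniteMeasureOnCompacts μ]
    {f : α → ℝ} (hf : Continuous f) {s K : Set α} (hK : IsCompact K) (hsK : s ⊆ K) :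
    MemLp f 2 (μ.restrict s) :=
  (memLp_two_iff_integrable_sq hf.aestronglyMeasurable.restrict).2
    (((hf.pow 2).continuousOn.integrableOn_compact hK).mono_set hsK)

lemma sq_intervalIntegral_le {f : ℝ → ℝ} (hf : Continuous f) {a b : ℝ} (hab : a ≤ b) :
    (∫ s in a..b, f s) ^ 2 ≤ (b - a) * ∫ s in a..b, f s ^ 2 := by
  have hmem : ∀ g : ℝ → ℝ, Continuous g → MemLp g 2 (volume.restrict (Ioc a b)) := fun g hg =>
    memLp_two_restrict_of_subset_isCompact hg isCompact_Icc Ioc_subset_Icc_self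
  have hCS := integral_abs_mul_abs_le (hmem f hf) (hmem (fun _ => 1) continuous_const)
  simp only [abs_one, mul_one, one_pow, MeasureTheory.integral_const,
    measureReal_restrict_apply_univ, Real.volume_real_Ioc_of_le hab, smul_eq_mul] at hCS
  have habs : |∫ s in a..b, f s| ≤ ∫ s in Ioc a b, |f s| := by
    rw [integral_of_le hab]; exact abs_integral_le_integral_abs
  calc (∫ s in a..b, f s) ^ 2 = |∫ s in a..b, f s| ^ 2 := (sq_abs _).symm
    _ ≤ (√(∫ s in Ioc a b, f s ^ 2) * √(b - a)) ^ 2 :=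
        pow_le_pow_left₀ (abs_nonneg _) (habs.trans hCS) 2
    _ = (b - a) * ∫ s in a..b, f s ^ 2 := by
        rw [mul_pow, Real.sq_sqrt (setIntegral_nonneg measurableSet_Ioc fun _ _ => sq_nonneg _),
          Real.sq_sqrt (sub_nonneg.2 hab), integral_of_le hab, mul_comm]

lemma sq_sub_sq_le_integral {f f' : ℝ → ℝ} (hd : ∀ s, HasDerivAt f (f' s) s)
    (hf' : Continuous f') {a b x y : ℝ} (hx : x ∈ Icc a b) (hy : y ∈ Icc a b) :
    f x ^ 2 - f y ^ 2 ≤ ∫ s in a..b, 2 * |f s| * |f' s| := by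
  have hf : Continuous f := continuous_iff_continuousAt.2 fun s => (hd s).continuousAt
  have hab : a ≤ b := hx.1.trans hx.2
  have hq : Continuous fun s => 2 * f s * f' s := (continuous_const.mul hf).mul hf'
  have ftc : ∫ s in y..x, 2 * f s * f' s = f x ^ 2 - f y ^ 2 :=
    integral_eq_sub_of_hasDerivAt (fun s _ => by simpa using (hd s).pow 2)
      (hq.intervalIntegrable _ _)
  have hsub : uIoc y x ⊆ uIoc a b := uIoc_subset_uIoc_of_uIcc_subset_uIcc
    (uIcc_subset_uIcc (Icc_subset_uIcc hy) (Icc_subset_uIcc hx))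
  calc f x ^ 2 - f y ^ 2 ≤ ‖∫ s in y..x, 2 * f s * f' s‖ := ftc ▸ le_abs_self _
    _ ≤ ∫ s in uIoc y x, ‖2 * f s * f' s‖ := norm_integral_le_integral_norm_uIoc
    _ ≤ ∫ s in uIoc a b, ‖2 * f s * f' s‖ :=
        setIntegral_mono_set (hq.norm.integrableOn_uIoc) (.of_forall fun _ => norm_nonneg _)
          hsub.eventuallyLE
    _ = ∫ s in a..b, 2 * |f s| * |f' s| := by
        simp [uIoc_of_le hab, integral_of_le hab]

lemma le_inv_mul_integral_add {g : ℝ → ℝ} {a b c D : ℝ} (hab : a < b)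
    (hg : IntervalIntegrable g volume a b) (hle : ∀ y ∈ Icc a b, c ≤ g y + D) :
    c ≤ (b - a)⁻¹ * (∫ y in a..b, g y) + D := by
  have H : ∫ _ in a..b, (c - D) ≤ ∫ y in a..b, g y :=
    integral_mono_on hab.le intervalIntegrable_const hg fun y hy => by linarith [hle y hy]
  rw [intervalIntegral.integral_const, smul_eq_mul] at H
  have hba : 0 < b - a := sub_pos.2 hab
  rw [inv_mul_eq_div, ← sub_le_iff_le_add, le_div_iff₀ hba]
  linarith

lemma contDiff_pdx {n m : WithTop ℕ∞} {f : ℝ × ℝ → ℝ} (hf : ContDiff ℝ n f) (hmn : m + 1 ≤ n) :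
    ContDiff ℝ m (pdx f) :=
  (ContinuousLinearMap.apply ℝ ℝ ((1 : ℝ), (0 : ℝ))).contDiff.comp (hf.fderiv_right hmn)

lemma contDiff_pdz {n m : WithTop ℕ∞} {f : ℝ × ℝ → ℝ} (hf : ContDiff ℝ n f) (hmn : m + 1 ≤ n) :
    ContDiff ℝ m (pdz f) :=
  (ContinuousLinearMap.apply ℝ ℝ ((0 : ℝ), (1 : ℝ))).contDiff.comp (hf.fderiv_right hmn)

lemma hasDerivAt_pdx {f : ℝ × ℝ → ℝ} (hf : Differentiable ℝ f) (t z : ℝ) :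
    HasDerivAt (fun t => f (t, z)) (pdx f (t, z)) t :=
  (hf (t, z)).hasFDerivAt.comp_hasDerivAt t ((hasDerivAt_id t).prodMk (hasDerivAt_const t z))

lemma hasDerivAt_pdz {f : ℝ × ℝ → ℝ} (hf : Differentiable ℝ f) (x s : ℝ) :
    HasDerivAt (fun s => f (x, s)) (pdz f (x, s)) s :=
  (hf (x, s)).hasFDerivAt.comp_hasDerivAt s ((hasDerivAt_const s x).prodMk (hasDerivAt_id s))

lemma continuous_wOp {u : ℝ × ℝ → ℝ} (hux : Continuous (pdx u)) : Continuous (wOp u) := by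
  have hprim := continuous_parametric_primitive_of_continuous (μ := volume) (a₀ := 0)
    (f := fun x s => pdx u (x, s)) hux
  refine hprim.neg.congr fun p => ?_
  rw [Pi.neg_apply, wOp, integral_symm, neg_neg]

lemma wOp_sq_le {u : ℝ × ℝ → ℝ} (hux : Continuous (pdx u)) {h x z : ℝ} (hz : z ∈ Icc (-h) 0) :
    wOp u (x, z) ^ 2 ≤ ∫ s in (-h)..(0 : ℝ), h * pdx u (x, s) ^ 2 := by
  have hf : Continuous fun s => pdx u (x, s) := by fun_prop
  have hh : 0 ≤ h := by linarith [hz.1, hz.2]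
  rw [intervalIntegral.integral_const_mul]
  calc wOp u (x, z) ^ 2 ≤ (0 - z) * ∫ s in z..(0 : ℝ), pdx u (x, s) ^ 2 :=
        sq_intervalIntegral_le hf hz.2
    _ ≤ h * ∫ s in (-h)..(0 : ℝ), pdx u (x, s) ^ 2 := by
        gcongr
        · exact integral_nonneg hz.2 fun _ _ => sq_nonneg _
        · linarith [hz.1]
        · exact integral_mono_interval hz.1 hz.2 le_rfl (.of_forall fun _ => sq_nonneg _)
            ((hf.pow 2).intervalIntegrable _ _)

lemma integrableOn_Ioo_prod_Ioo {f : ℝ × ℝ → ℝ} (hf : Continuous f) {a b c d : ℝ} :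
    IntegrableOn f (Ioo a b ×ˢ Ioo c d) :=
  (hf.continuousOn.integrableOn_compact (isCompact_Icc.prod isCompact_Icc)).mono_set
    (prod_mono Ioo_subset_Icc_self Ioo_subset_Icc_self)

section Rectangle

variable {L h : ℝ}

lemma integrableOn_dom {f : ℝ × ℝ → ℝ} (hf : Continuous f) : IntegrableOn f (dom L h) :=
  integrableOn_Ioo_prod_Ioo hf

lemma memLp_two_dom {f : ℝ × ℝ → ℝ} (hf : Continuous f) :
    MemLp f 2 (volume.restrict (dom L h)) :=
  memLp_two_restrict_of_subset_isCompact hf (isCompact_Icc.prod isCompact_Icc)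
    (prod_mono Ioo_subset_Icc_self Ioo_subset_Icc_self)

lemma setIntegral_dom_eq_integral_integral (hL : 0 ≤ L) (hh : 0 ≤ h) {f : ℝ × ℝ → ℝ}
    (hf : Continuous f) :
    ∫ p in dom L h, f p = ∫ x in (0 : ℝ)..L, ∫ z in (-h)..(0 : ℝ), f (x, z) := by
  have hint : IntegrableOn f (Ioo 0 L ×ˢ Ioo (-h) 0) (volume.prod volume) :=
    Measure.volume_eq_prod ℝ ℝ ▸ integrableOn_dom hf
  rw [dom, Measure.volume_eq_prod, setIntegral_prod f hint, integral_of_le hL,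
    integral_Ioc_eq_integral_Ioo]
  congr 1 with x
  rw [integral_of_le (neg_nonpos.2 hh), integral_Ioc_eq_integral_Ioo]

lemma setIntegral_dom_eq_integral_integral_swap (hL : 0 ≤ L) (hh : 0 ≤ h) {f : ℝ × ℝ → ℝ}
    (hf : Continuous f) :
    ∫ p in dom L h, f p = ∫ z in (-h)..(0 : ℝ), ∫ x in (0 : ℝ)..L, f (x, z) := by
  have hint : IntegrableOn (fun q : ℝ × ℝ => f q.swap) (Ioo (-h) 0 ×ˢ Ioo 0 L)
      (volume.prod volume) :=
    Measure.volume_eq_prod ℝ ℝ ▸ integrableOn_Ioo_prod_Ioo (hf.comp continuous_swap)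
  rw [dom, Measure.volume_eq_prod, ← setIntegral_prod_swap, setIntegral_prod _ hint,
    integral_of_le (neg_nonpos.2 hh), integral_Ioc_eq_integral_Ioo]
  congr 1 with z
  rw [integral_of_le hL, integral_Ioc_eq_integral_Ioo]
  rfl

end Rectangle

section Norms

variable (L h : ℝ) (f : ℝ × ℝ → ℝ)

lemma l2_nonneg : 0 ≤ l2 L h f := Real.sqrt_nonneg _

lemma sq_l2 : l2 L h f ^ 2 = ∫ p in dom L h, f p ^ 2 :=
  Real.sq_sqrt (integral_nonneg fun _ => sq_nonneg _)

lemma l2_le_h1n : l2 L h f ≤ h1n L h f :=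
  Real.le_sqrt_of_sq_le <| by linarith [sq_nonneg (l2 L h (pdx f)), sq_nonneg (l2 L h (pdz f))]

lemma l2_pdx_le_h1n : l2 L h (pdx f) ≤ h1n L h f :=
  Real.le_sqrt_of_sq_le <| by linarith [sq_nonneg (l2 L h f), sq_nonneg (l2 L h (pdz f))]

lemma l2_pdz_le_h1n : l2 L h (pdz f) ≤ h1n L h f :=
  Real.le_sqrt_of_sq_le <| by linarith [sq_nonneg (l2 L h f), sq_nonneg (l2 L h (pdx f))]

lemma h1n_le_h2n : h1n L h f ≤ h2n L h f :=
  Real.le_sqrt_of_sq_le <| by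
    linarith [sq_nonneg (l2 L h (pdx (pdx f))), sq_nonneg (l2 L h (pdx (pdz f))),
      sq_nonneg (l2 L h (pdz (pdz f)))]

lemma l2_pdx_pdx_le_h2n : l2 L h (pdx (pdx f)) ≤ h2n L h f :=
  Real.le_sqrt_of_sq_le <| by
    linarith [sq_nonneg (h1n L h f), sq_nonneg (l2 L h (pdx (pdz f))),
      sq_nonneg (l2 L h (pdz (pdz f)))]

lemma l2_pdx_pdz_le_h2n : l2 L h (pdx (pdz f)) ≤ h2n L h f :=
  Real.le_sqrt_of_sq_le <| by
    linarith [sq_nonneg (h1n L h f), sq_nonneg (l2 L h (pdx (pdx f))),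
      sq_nonneg (l2 L h (pdz (pdz f)))]

variable {L h f} {g : ℝ × ℝ → ℝ}

lemma integral_abs_mul_abs_le_l2_mul_l2 (hf : Continuous f) (hg : Continuous g) :
    ∫ p in dom L h, |f p| * |g p| ≤ l2 L h f * l2 L h g :=
  integral_abs_mul_abs_le (memLp_two_dom hf) (memLp_two_dom hg)

lemma integral_two_mul_abs_mul_abs_le (hf : Continuous f) (hg : Continuous g) :
    ∫ p in dom L h, 2 * |f p| * |g p| ≤ 2 * (l2 L h f * l2 L h g) := by
  simp_rw [mul_assoc]
  rw [MeasureTheory.integral_const_mul]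
  gcongr
  exact integral_abs_mul_abs_le_l2_mul_l2 hf hg

lemma abs_integral_mul_le_l2_mul_l2 (hf : Continuous f) (hg : Continuous g) :
    |∫ p in dom L h, f p * g p| ≤ l2 L h f * l2 L h g :=
  (abs_integral_le_integral_abs.trans_eq (by simp_rw [abs_mul])).trans
    (integral_abs_mul_abs_le_l2_mul_l2 hf hg)

lemma l2_add_sq_le (hf : Continuous f) (hg : Continuous g) :
    l2 L h (fun p => f p + g p) ^ 2 ≤ 2 * l2 L h f ^ 2 + 2 * l2 L h g ^ 2 := by
  have hf2 : IntegrableOn (fun p => 2 * f p ^ 2) (dom L h) := integrableOn_dom (by fun_prop)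
  have hg2 : IntegrableOn (fun p => 2 * g p ^ 2) (dom L h) := integrableOn_dom (by fun_prop)
  simp only [sq_l2, ← MeasureTheory.integral_const_mul]
  rw [← integral_add hf2 hg2]
  refine integral_mono (integrableOn_dom (by fun_prop)) (hf2.add hg2) fun p => ?_
  nlinarith [sq_nonneg (f p - g p)]

end Norms

section Estimates

variable {L h : ℝ}

lemma integral_slice_sq_le (hL : 0 < L) (hh : 0 ≤ h) {F : ℝ × ℝ → ℝ} (hF : ContDiff ℝ 1 F)
    {x : ℝ} (hx : x ∈ Icc 0 L) :
    ∫ z in (-h)..(0 : ℝ), F (x, z) ^ 2 ≤ L⁻¹ * l2 L h F ^ 2 + 2 * (l2 L h F * l2 L h (pdx F)) := by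
  have hFc : Continuous F := hF.continuous
  have hFx : Continuous (pdx F) := (contDiff_pdx (m := 0) hF (by norm_num)).continuous
  have hd := hasDerivAt_pdx (hF.differentiable one_ne_zero)
  set D := ∫ p in dom L h, 2 * |F p| * |pdx F p| with hD
  have hvar : ∀ x' ∈ Icc 0 L, ∫ z in (-h)..(0 : ℝ), F (x, z) ^ 2 ≤
      (∫ z in (-h)..(0 : ℝ), F (x', z) ^ 2) + D := by
    intro x' hx'
    rw [hD, setIntegral_dom_eq_integral_integral_swap hL.le hh (by fun_prop),
      ← sub_le_iff_le_add', ← intervalIntegral.integral_sub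
        (Continuous.intervalIntegrable (by fun_prop) _ _)
        (Continuous.intervalIntegrable (by fun_prop) _ _)]
    exact integral_mono_on (neg_nonpos.2 hh) (Continuous.intervalIntegrable (by fun_prop) _ _)
      (Continuous.intervalIntegrable (by fun_prop) _ _) fun z _ =>
      sq_sub_sq_le_integral (fun t => hd t z) (by fun_prop) hx hx'
  have havg := le_inv_mul_integral_add hL (Continuous.intervalIntegrable (by fun_prop) _ _) hvar
  rw [sub_zero, ← setIntegral_dom_eq_integral_integral (f := fun p => F p ^ 2) hL.le hh
    (by fun_prop), ← sq_l2] at havg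
  linarith [integral_two_mul_abs_mul_abs_le (L := L) (h := h) hFc hFx]

lemma integral_slice_sq_le_mul (hL : 0 < L) (hh : 0 ≤ h) {F : ℝ × ℝ → ℝ} (hF : ContDiff ℝ 1 F)
    {A B : ℝ} (hA : l2 L h F ≤ A) (hB : l2 L h F ≤ B) (hxB : l2 L h (pdx F) ≤ B)
    {x : ℝ} (hx : x ∈ Icc 0 L) :
    ∫ z in (-h)..(0 : ℝ), F (x, z) ^ 2 ≤ (L⁻¹ + 2) * (A * B) := by
  have hA0 : 0 ≤ A := (l2_nonneg L h F).trans hA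
  have hFF : l2 L h F ^ 2 ≤ A * B := by rw [sq]; exact mul_le_mul hA hB (l2_nonneg _ _ _) hA0
  have hFFx : l2 L h F * l2 L h (pdx F) ≤ A * B := mul_le_mul hA hxB (l2_nonneg _ _ _) hA0
  have hLFF : L⁻¹ * l2 L h F ^ 2 ≤ L⁻¹ * (A * B) :=
    mul_le_mul_of_nonneg_left hFF (inv_nonneg.2 hL.le)
  linarith [integral_slice_sq_le hL hh hF hx]

lemma l2_mul_sq_le_of_slice_bounds (hL : 0 ≤ L) (hh : 0 ≤ h) {f g G : ℝ × ℝ → ℝ}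
    (hf : Continuous f) (hg : Continuous g) (hG : Continuous G) {K : ℝ}
    (hfG : ∀ x ∈ Icc 0 L, ∀ z ∈ Icc (-h) 0, f (x, z) ^ 2 ≤ ∫ s in (-h)..(0 : ℝ), G (x, s))
    (hgK : ∀ x ∈ Icc 0 L, ∫ z in (-h)..(0 : ℝ), g (x, z) ^ 2 ≤ K) :
    l2 L h (fun p => f p * g p) ^ 2 ≤ K * ∫ p in dom L h, G p := by
  have hh' : -h ≤ 0 := neg_nonpos.2 hh
  rw [sq_l2, setIntegral_dom_eq_integral_integral (f := fun p => (f p * g p) ^ 2) hL hh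
    (by fun_prop), setIntegral_dom_eq_integral_integral hL hh hG,
    ← intervalIntegral.integral_const_mul]
  refine integral_mono_on hL (Continuous.intervalIntegrable (by fun_prop) _ _)
    (Continuous.intervalIntegrable (by fun_prop) _ _) fun x hx => ?_
  have hG0 : 0 ≤ ∫ s in (-h)..(0 : ℝ), G (x, s) :=
    (sq_nonneg _).trans (hfG x hx 0 (right_mem_Icc.2 hh'))
  calc ∫ z in (-h)..(0 : ℝ), (f (x, z) * g (x, z)) ^ 2
      ≤ ∫ z in (-h)..(0 : ℝ), (∫ s in (-h)..(0 : ℝ), G (x, s)) * g (x, z) ^ 2 :=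
        integral_mono_on hh' (Continuous.intervalIntegrable (by fun_prop) _ _)
          (Continuous.intervalIntegrable (by fun_prop) _ _) fun z hz => by
            rw [mul_pow]; exact mul_le_mul_of_nonneg_right (hfG x hx z hz) (sq_nonneg _)
    _ = (∫ s in (-h)..(0 : ℝ), G (x, s)) * ∫ z in (-h)..(0 : ℝ), g (x, z) ^ 2 :=
        intervalIntegral.integral_const_mul _ _
    _ ≤ K * ∫ z in (-h)..(0 : ℝ), G (x, z) := by
        rw [mul_comm K]; exact mul_le_mul_of_nonneg_left (hgK x hx) hG0

lemma l2_mul_sq_le_of_bottom_eq_zero (hL : 0 ≤ L) (hh : 0 ≤ h) {u g : ℝ × ℝ → ℝ}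
    (hu : ContDiff ℝ 1 u) (hg : Continuous g) (hub : ∀ x ∈ Icc 0 L, u (x, -h) = 0) {K : ℝ}
    (hgK : ∀ x ∈ Icc 0 L, ∫ z in (-h)..(0 : ℝ), g (x, z) ^ 2 ≤ K) :
    l2 L h (fun p => u p * g p) ^ 2 ≤ K * (2 * h1n L h u ^ 2) := by
  have huz : Continuous (pdz u) := (contDiff_pdz (m := 0) hu (by norm_num)).continuous
  have hK0 : 0 ≤ K := (integral_nonneg (neg_nonpos.2 hh) fun _ _ => sq_nonneg _).trans
    (hgK 0 (left_mem_Icc.2 hL))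
  have hvert : ∀ x ∈ Icc 0 L, ∀ z ∈ Icc (-h) 0,
      u (x, z) ^ 2 ≤ ∫ s in (-h)..(0 : ℝ), 2 * |u (x, s)| * |pdz u (x, s)| := fun x hx z hz => by
    simpa [hub x hx] using sq_sub_sq_le_integral (hasDerivAt_pdz (hu.differentiable one_ne_zero) x)
      (by fun_prop) hz (left_mem_Icc.2 (neg_nonpos.2 hh))
  calc l2 L h (fun p => u p * g p) ^ 2 ≤ K * ∫ p in dom L h, 2 * |u p| * |pdz u p| :=
        l2_mul_sq_le_of_slice_bounds hL hh hu.continuous hg (by fun_prop) hvert hgK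
    _ ≤ K * (2 * (l2 L h u * l2 L h (pdz u))) :=
        mul_le_mul_of_nonneg_left (integral_two_mul_abs_mul_abs_le hu.continuous huz) hK0
    _ ≤ K * (2 * h1n L h u ^ 2) := by
        rw [sq]
        gcongr
        · exact l2_nonneg _ _ _
        · exact (l2_nonneg _ _ _).trans (l2_le_h1n L h u)
        · exact l2_le_h1n L h u
        · exact l2_pdz_le_h1n L h u

lemma l2_wOp_mul_sq_le (hL : 0 ≤ L) (hh : 0 ≤ h) {u g : ℝ × ℝ → ℝ} (hu : ContDiff ℝ 1 u)
    (hg : Continuous g) {K : ℝ} (hgK : ∀ x ∈ Icc 0 L, ∫ z in (-h)..(0 : ℝ), g (x, z) ^ 2 ≤ K) :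
    l2 L h (fun p => wOp u p * g p) ^ 2 ≤ K * (h * h1n L h u ^ 2) := by
  have hux : Continuous (pdx u) := (contDiff_pdx (m := 0) hu (by norm_num)).continuous
  have hK0 : 0 ≤ K := (integral_nonneg (neg_nonpos.2 hh) fun _ _ => sq_nonneg _).trans
    (hgK 0 (left_mem_Icc.2 hL))
  calc l2 L h (fun p => wOp u p * g p) ^ 2 ≤ K * ∫ p in dom L h, h * pdx u p ^ 2 :=
        l2_mul_sq_le_of_slice_bounds hL hh (continuous_wOp hux) hg (by fun_prop)
          (fun _ _ _ hz => wOp_sq_le hux hz) hgK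
    _ = K * (h * l2 L h (pdx u) ^ 2) := by rw [MeasureTheory.integral_const_mul, sq_l2]
    _ ≤ K * (h * h1n L h u ^ 2) := by
        gcongr
        exacts [l2_nonneg _ _ _, l2_pdx_le_h1n _ _ _]

end Estimates

theorem stmt10 (L h : ℝ) (hL : 0 < L) (hh : 0 < h) :
    ∃ c > 0, ∀ u φ ψ : ℝ × ℝ → ℝ,
      ContDiff ℝ 1 u → ContDiff ℝ 2 φ → Continuous ψ →
      (∀ z ∈ Icc (-h) (0:ℝ), u (0, z) = 0 ∧ u (L, z) = 0) →
      (∀ x ∈ Icc (0:ℝ) L, u (x, -h) = 0) →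
      (∀ x ∈ Icc (0:ℝ) L, (∫ z in (-h)..(0:ℝ), u (x, z)) = 0) →
      (∀ z ∈ Icc (-h) (0:ℝ), φ (0, z) = 0 ∧ φ (L, z) = 0) →
      (∀ x ∈ Icc (0:ℝ) L, φ (x, -h) = 0) →
      |∫ p in dom L h, (u p * pdx φ p + wOp u p * pdz φ p) * ψ p| ≤
        c * h1n L h u * h1n L h φ ^ ((1:ℝ)/2) * h2n L h φ ^ ((1:ℝ)/2) * l2 L h ψ := by
  refine ⟨√((2 * h + 4) * (L⁻¹ + 2)), by positivity, ?_⟩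
  intro u φ ψ hu hφ hψ _ hub _ _ _
  have hφx : ContDiff ℝ 1 (pdx φ) := contDiff_pdx hφ (by norm_num)
  have hφz : ContDiff ℝ 1 (pdz φ) := contDiff_pdz hφ (by norm_num)
  have hw : Continuous (wOp u) :=
    continuous_wOp (contDiff_pdx (m := 0) hu (by norm_num)).continuous
  set A := h1n L h φ
  set B := h2n L h φ
  have hKx : ∀ x ∈ Icc 0 L, ∫ z in (-h)..(0 : ℝ), pdx φ (x, z) ^ 2 ≤ (L⁻¹ + 2) * (A * B) :=
    fun x hx => integral_slice_sq_le_mul hL hh.le hφx (l2_pdx_le_h1n _ _ _)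
      ((l2_pdx_le_h1n _ _ _).trans (h1n_le_h2n _ _ _)) (l2_pdx_pdx_le_h2n _ _ _) hx
  have hKz : ∀ x ∈ Icc 0 L, ∫ z in (-h)..(0 : ℝ), pdz φ (x, z) ^ 2 ≤ (L⁻¹ + 2) * (A * B) :=
    fun x hx => integral_slice_sq_le_mul hL hh.le hφz (l2_pdz_le_h1n _ _ _)
      ((l2_pdz_le_h1n _ _ _).trans (h1n_le_h2n _ _ _)) (l2_pdx_pdz_le_h2n _ _ _) hx
  have hu0 : 0 ≤ h1n L h u := Real.sqrt_nonneg _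
  have hA : 0 ≤ A := Real.sqrt_nonneg _
  have hB : 0 ≤ B := Real.sqrt_nonneg _
  have hF : l2 L h (fun p => u p * pdx φ p + wOp u p * pdz φ p) ≤
      √((2 * h + 4) * (L⁻¹ + 2)) * h1n L h u * √A * √B := by
    rw [← pow_le_pow_iff_left₀ (l2_nonneg _ _ _) (by positivity) two_ne_zero, mul_pow, mul_pow,
      mul_pow, Real.sq_sqrt (by positivity), Real.sq_sqrt hA, Real.sq_sqrt hB]
    linarith [l2_add_sq_le (L := L) (h := h) (f := fun p => u p * pdx φ p)
        (g := fun p => wOp u p * pdz φ p) (hu.continuous.mul hφx.continuous)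
        (hw.mul hφz.continuous),
      l2_mul_sq_le_of_bottom_eq_zero hL.le hh.le hu hφx.continuous hub hKx,
      l2_wOp_mul_sq_le hL.le hh.le hu hφz.continuous hKz]
  rw [← Real.sqrt_eq_rpow, ← Real.sqrt_eq_rpow]
  exact (abs_integral_mul_le_l2_mul_l2 (by fun_prop) hψ).trans
    (mul_le_mul_of_nonneg_right hF (l2_nonneg _ _ _))
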